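/- For every λ > 0, τ > 0 and every ε ∈ ℝ, any solution x of the controlled system with x(0) = x₀ satisfies x(2τ) = ((e^{λτ} − 1)·e^{(λ−ε)τ} + e^{λτ})·x₀, and the multiplier satisfies (e^{λτ} − 1)·e^{(λ−ε)τ} + e^{λτ} > 1. Consequently, for x₀ ≠ 0 one has |x(2τ)| > |x₀|, so no choice of control parameters ε, τ stabilizes the origin by this scheme. -/

import Mathlib

/-!
While the control is off, on `[0, τ]`, the solution is `x₀ e^{λt}`. On `[τ, 2τ]` the delayed
state is therefore the known forcing `x₀ e^{λ(t−τ)}`, and the solution is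
`x₀ e^{λ(t−τ)} + x₀ (e^{λτ} − 1) e^{(λ−ε)(t−τ)}`; both formulas are forced by uniqueness for
linear ODEs. At `t = 2τ` the first summand is `e^{λτ} x₀` with `e^{λτ} > 1`, and the second has
the same sign as `x₀`, whatever `ε` is.
-/

/-- A solution of the linear system `ẋ = λx` under the oscillating perturbation
involving the difference between the current state and one delayed state:
`ẋ(t) = λx(t) + ε(t)·(x(t−τ) − x(t))` with `ε(t) = 0` on `[2kτ,(2k+1)τ)` and
`ε(t) = ε` on `[(2k+1)τ,(2k+2)τ)`, with initial value `x₀`. -/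
def IsSolSingleDelay (lam ε τ x₀ : ℝ) (x : ℝ → ℝ) : Prop :=
  ContinuousOn x (Set.Ici 0) ∧ x 0 = x₀ ∧
  (∀ k : ℕ, ∀ t ∈ Set.Ico (2 * (k : ℝ) * τ) ((2 * (k : ℝ) + 1) * τ),
      HasDerivWithinAt x (lam * x t) (Set.Ici t) t) ∧
  (∀ k : ℕ, ∀ t ∈ Set.Ico ((2 * (k : ℝ) + 1) * τ) ((2 * (k : ℝ) + 2) * τ),
      HasDerivWithinAt x (lam * x t + ε * (x (t - τ) - x t)) (Set.Ici t) t)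

open Set Real

theorem eqOn_Icc_of_hasDerivWithinAt_affine {E : Type*} [NormedAddCommGroup E] [NormedSpace ℝ E]
    {μ : ℝ} {h f g : ℝ → E} {a b : ℝ}
    (hf : ContinuousOn f (Icc a b))
    (hf' : ∀ t ∈ Ico a b, HasDerivWithinAt f (μ • f t + h t) (Ici t) t)
    (hg : ContinuousOn g (Icc a b))
    (hg' : ∀ t ∈ Ico a b, HasDerivWithinAt g (μ • g t + h t) (Ici t) t)
    (ha : f a = g a) :
    EqOn f g (Icc a b) := by
  have hlip : ∀ t, LipschitzOnWith ‖μ‖₊ (fun y : E ↦ μ • y + h t) univ := fun t ↦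
    (LipschitzWith.of_dist_le_mul fun y z ↦ by
      rw [dist_add_right, dist_smul₀, coe_nnnorm]).lipschitzOnWith
  exact ODE_solution_unique_of_mem_Icc_right (fun t _ ↦ hlip t) hf hf'
    (fun _ _ ↦ mem_univ _) hg hg' (fun _ _ ↦ mem_univ _) ha

theorem hasDerivAt_const_mul_exp_mul_sub (c μ a t : ℝ) :
    HasDerivAt (fun s ↦ c * exp (μ * (s - a))) (μ * (c * exp (μ * (t - a)))) t := by
  refine ((((hasDerivAt_id t).sub_const a).const_mul μ).exp.const_mul c).congr_deriv ?_
  simp only [id, mul_one]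
  ring

theorem eqOn_Icc_const_mul_exp_of_hasDerivWithinAt {x : ℝ → ℝ} {μ a b : ℝ}
    (hx : ContinuousOn x (Icc a b))
    (hx' : ∀ t ∈ Ico a b, HasDerivWithinAt x (μ * x t) (Ici t) t) :
    EqOn x (fun t ↦ x a * exp (μ * (t - a))) (Icc a b) :=
  eqOn_Icc_of_hasDerivWithinAt_affine (h := 0) hx
    (fun t ht ↦ by simpa using hx' t ht)
    (Continuous.continuousOn (by fun_prop))
    (fun t _ ↦ by simpa using (hasDerivAt_const_mul_exp_mul_sub _ μ a t).hasDerivWithinAt)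
    (by simp)

namespace IsSolSingleDelay

variable {lam ε τ x₀ : ℝ} {x : ℝ → ℝ}

theorem eq_of_mem_Icc_zero (hx : IsSolSingleDelay lam ε τ x₀ x) {t : ℝ} (ht : t ∈ Icc 0 τ) :
    x t = x₀ * exp (lam * t) := by
  obtain ⟨hcont, h0, hfree, -⟩ := hx
  have := eqOn_Icc_const_mul_exp_of_hasDerivWithinAt (hcont.mono Icc_subset_Ici_self)
    (fun s hs ↦ hfree 0 s (by simpa using hs)) ht
  simpa [h0] using this

theorem eq_of_mem_Icc_tau (hx : IsSolSingleDelay lam ε τ x₀ x) (hτ : 0 ≤ τ) {t : ℝ}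
    (ht : t ∈ Icc τ (2 * τ)) :
    x t = x₀ * exp (lam * (t - τ)) + x₀ * (exp (lam * τ) - 1) * exp ((lam - ε) * (t - τ)) := by
  have hdelay : ∀ s ∈ Ico τ (2 * τ), x (s - τ) = x₀ * exp (lam * (s - τ)) := fun s hs ↦
    hx.eq_of_mem_Icc_zero ⟨by linarith [hs.1], by linarith [hs.2]⟩
  refine eqOn_Icc_of_hasDerivWithinAt_affine (μ := lam - ε)
    (h := fun s ↦ ε * (x₀ * exp (lam * (s - τ))))
    (g := fun s ↦ x₀ * exp (lam * (s - τ)) + x₀ * (exp (lam * τ) - 1) * exp ((lam - ε) * (s - τ)))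
    (hx.1.mono fun s hs ↦ hτ.trans hs.1) (fun s hs ↦ ?_)
    (Continuous.continuousOn (by fun_prop)) (fun s _ ↦ ?_) ?_ ht
  · refine (hx.2.2.2 0 s (by simpa using hs)).congr_deriv ?_
    rw [hdelay s hs, smul_eq_mul]
    ring
  · have hg := (hasDerivAt_const_mul_exp_mul_sub x₀ lam τ s).add
      (hasDerivAt_const_mul_exp_mul_sub (x₀ * (exp (lam * τ) - 1)) (lam - ε) τ s)
    refine hg.hasDerivWithinAt.congr_deriv ?_
    simp only [smul_eq_mul]
    ring
  · simp only [hx.eq_of_mem_Icc_zero ⟨hτ, le_rfl⟩, sub_self, mul_zero, exp_zero, mul_one]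
    ring

theorem apply_two_mul (hx : IsSolSingleDelay lam ε τ x₀ x) (hτ : 0 ≤ τ) :
    x (2 * τ) = ((exp (lam * τ) - 1) * exp ((lam - ε) * τ) + exp (lam * τ)) * x₀ := by
  rw [hx.eq_of_mem_Icc_tau hτ ⟨by linarith, le_rfl⟩, two_mul, add_sub_cancel_right]
  ring

end IsSolSingleDelay

theorem one_lt_exp_sub_one_mul_exp_add_exp {a : ℝ} (ha : 0 < a) (b : ℝ) :
    1 < (exp a - 1) * exp b + exp a := by
  have ha' : 1 < exp a := one_lt_exp_iff.2 ha
  have := mul_pos (sub_pos.2 ha') (exp_pos b)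
  linarith

/-- For the oscillating perturbation involving the difference between the current state
and one delayed state, the one-period multiplier is
`(e^{λτ} − 1)·e^{(λ−ε)τ} + e^{λτ} > 1`, so stabilization is impossible for every `ε, τ`. -/
theorem odfc_single_delay_cannot_stabilize
    (lam : ℝ) (hlam : 0 < lam) :
    ∀ ε τ : ℝ, 0 < τ → ∀ x₀ : ℝ, ∀ x : ℝ → ℝ, IsSolSingleDelay lam ε τ x₀ x →
      x (2 * τ) = ((Real.exp (lam * τ) - 1) * Real.exp ((lam - ε) * τ) +
          Real.exp (lam * τ)) * x₀ ∧
      1 < (Real.exp (lam * τ) - 1) * Real.exp ((lam - ε) * τ) + Real.exp (lam * τ) ∧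
      (x₀ ≠ 0 → |x₀| < |x (2 * τ)|) := by
  intro ε τ hτ x₀ x hx
  have hmul := one_lt_exp_sub_one_mul_exp_add_exp (mul_pos hlam hτ) ((lam - ε) * τ)
  refine ⟨hx.apply_two_mul hτ.le, hmul, fun hx₀ ↦ ?_⟩
  rw [hx.apply_two_mul hτ.le, abs_mul, abs_of_pos (one_pos.trans hmul)]
  exact lt_mul_of_one_lt_left (abs_pos.2 hx₀) hmul
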